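/- arXiv:2604.16724 — 3 statements merged into one kernel-verified Lean document; each statement's English description precedes it below -/
import Mathlib

section
/- Let κ_c := 2√3/3 − 1. For every real κ ≥ 0 with κ ≠ 1/2: e_WB(κ) > 0 if and only if (0 ≤ κ < κ_c or κ > 1/2); e_WB(κ) < 0 if and only if κ_c < κ < 1/2; and e_WB(κ) = 0 if and only if κ = κ_c. In particular the Whitham–Benjamin function is positive exactly on the unstable region 𝒰 = {κ ≥ 0 : κ < κ_c or κ > 1/2} and negative exactly on the stable region 𝒮 = {κ ≥ 0 : κ_c < κ < 1/2}. -/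
noncomputable section

/-- The Whitham–Benjamin function
`e_WB(κ) = (6κ⁴ + 15κ³ + 28κ² + 47κ − 8)/(8(2κ−1)(κ+1)²)`. -/
def eWB (κ : ℝ) : ℝ :=
  (6 * κ ^ 4 + 15 * κ ^ 3 + 28 * κ ^ 2 + 47 * κ - 8) / (8 * (2 * κ - 1) * (κ + 1) ^ 2)

/-- The critical capillarity value `κ_c = 2√3/3 − 1`. -/
def kappaC : ℝ := 2 * Real.sqrt 3 / 3 - 1

/-- For every `κ ≥ 0` with `κ ≠ 1/2`: `e_WB(κ) > 0` iff `κ < κ_c` or `κ > 1/2`;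
`e_WB(κ) < 0` iff `κ_c < κ < 1/2`; and `e_WB(κ) = 0` iff `κ = κ_c`.  Hence the
Whitham–Benjamin function is positive exactly on the unstable region
`𝒰 = {κ ≥ 0 : κ < κ_c or κ > 1/2}` and negative exactly on the stable region
`𝒮 = {κ ≥ 0 : κ_c < κ < 1/2}`. -/
theorem eWB_sign (κ : ℝ) (hκ : 0 ≤ κ) (hκ2 : κ ≠ 1 / 2) :
    (0 < eWB κ ↔ (κ < kappaC ∨ 1 / 2 < κ)) ∧
    (eWB κ < 0 ↔ (kappaC < κ ∧ κ < 1 / 2)) ∧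
    (eWB κ = 0 ↔ κ = kappaC) := by
  have hs : Real.sqrt 3 ^ 2 = 3 := Real.sq_sqrt (by norm_num)
  have hs0 : 0 ≤ Real.sqrt 3 := Real.sqrt_nonneg 3
  have hs1 : 1 < Real.sqrt 3 := by nlinarith
  have hkc : kappaC = 2 * Real.sqrt 3 / 3 - 1 := rfl
  have hkclt : kappaC < 1 / 2 := by rw [hkc]; nlinarith
  have hkc0 : 0 ≤ kappaC := by rw [hkc]; nlinarith
  have hpkc : 3 * kappaC ^ 2 + 6 * kappaC - 1 = 0 := by
    rw [hkc]; linear_combination (4/3 : ℝ) * hs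
  have hq : 0 < 2 * κ ^ 2 + κ + 8 := by nlinarith
  have heq : eWB κ = ((3 * κ ^ 2 + 6 * κ - 1) * (2 * κ ^ 2 + κ + 8)) /
      (8 * (2 * κ - 1) * (κ + 1) ^ 2) := by
    unfold eWB; ring_nf
  have hsq : (0:ℝ) < (κ + 1) ^ 2 := by positivity
  rcases lt_trichotomy κ kappaC with h | h | h
  · -- κ < κ_c : numerator negative, denominator negative, eWB > 0
    have hk12 : κ < 1 / 2 := h.trans hkclt
    have hprod : 0 < (kappaC - κ) * (kappaC + κ + 2) :=
      mul_pos (by linarith) (by linarith)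
    have hp : 3 * κ ^ 2 + 6 * κ - 1 < 0 := by nlinarith
    have hN : (3 * κ ^ 2 + 6 * κ - 1) * (2 * κ ^ 2 + κ + 8) < 0 :=
      mul_neg_of_neg_of_pos hp hq
    have hD : 8 * (2 * κ - 1) * (κ + 1) ^ 2 < 0 := by nlinarith
    have hpos : 0 < eWB κ := by rw [heq]; exact div_pos_of_neg_of_neg hN hD
    refine ⟨⟨fun _ => Or.inl h, fun _ => hpos⟩,
      ⟨fun hneg => absurd hpos (by linarith), fun ⟨h1, _⟩ => absurd h (by linarith)⟩,
      ⟨fun h0 => absurd hpos (by linarith), fun h0 => absurd h (by rw [h0]; exact lt_irrefl _)⟩⟩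
  · -- κ = κ_c : numerator zero, eWB = 0
    have hp : 3 * κ ^ 2 + 6 * κ - 1 = 0 := by rw [h]; exact hpkc
    have hzero : eWB κ = 0 := by rw [heq, hp, zero_mul, zero_div]
    refine ⟨⟨fun hpos => absurd hzero (by linarith), ?_⟩,
      ⟨fun hneg => absurd hzero (by linarith), fun ⟨h1, _⟩ => absurd h (by linarith)⟩,
      ⟨fun _ => h, fun _ => hzero⟩⟩
    rintro (h1 | h1)
    · exact absurd h (by linarith)
    · exact absurd h (by linarith [hkclt])
  · -- κ > κ_c : numerator positive
    have hprod : 0 < (κ - kappaC) * (κ + kappaC + 2) :=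
      mul_pos (by linarith) (by linarith)
    have hp : 0 < 3 * κ ^ 2 + 6 * κ - 1 := by nlinarith
    have hN : 0 < (3 * κ ^ 2 + 6 * κ - 1) * (2 * κ ^ 2 + κ + 8) := mul_pos hp hq
    rcases lt_or_gt_of_ne hκ2 with h12 | h12
    · -- κ_c < κ < 1/2 : denominator negative, eWB < 0
      have hD : 8 * (2 * κ - 1) * (κ + 1) ^ 2 < 0 := by nlinarith
      have hneg : eWB κ < 0 := by rw [heq]; exact div_neg_of_pos_of_neg hN hD
      refine ⟨⟨fun hpos => absurd hneg (by linarith), ?_⟩,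
        ⟨fun _ => ⟨h, h12⟩, fun _ => hneg⟩,
        ⟨fun h0 => absurd hneg (by linarith), fun h0 => absurd h (by rw [h0]; exact lt_irrefl _)⟩⟩
      rintro (h1 | h1)
      · exact absurd h (by linarith)
      · exact absurd h12 (by linarith)
    · -- κ > 1/2 : denominator positive, eWB > 0
      have hD : 0 < 8 * (2 * κ - 1) * (κ + 1) ^ 2 := by nlinarith
      have hpos : 0 < eWB κ := by rw [heq]; exact div_pos hN hD
      refine ⟨⟨fun _ => Or.inr h12, fun _ => hpos⟩,
        ⟨fun hneg => absurd hpos (by linarith), fun ⟨_, h2⟩ => absurd h12 (by linarith)⟩,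
        ⟨fun h0 => absurd hpos (by linarith), fun h0 => absurd h (by rw [h0]; exact lt_irrefl _)⟩⟩
end
end

section
/- Let κ ≥ 0 be real. The function n ↦ √((1 + κn²)/n), defined on the positive natural numbers, is injective if and only if κ ≠ 1/n for every integer n ≥ 2. -/
noncomputable section

/-- For `κ ≥ 0`, the map `n ↦ √((1 + κn²)/n)` on the positive natural numbers
(the quotient of the deep-water gravity–capillary dispersion relation by the wave
number) is injective if and only if `κ ≠ 1/n` for every integer `n ≥ 2`. -/
theorem dispersion_quotient_injective_iff (κ : ℝ) (hκ : 0 ≤ κ) :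
    Function.Injective
        (fun n : ℕ+ => Real.sqrt ((1 + κ * (n : ℝ) ^ 2) / (n : ℝ))) ↔
      ∀ n : ℕ, 2 ≤ n → κ ≠ 1 / (n : ℝ) := by
  constructor
  · intro hinj n hn hk
    have hn0 : 0 < n := by omega
    have hne : (n : ℝ) ≠ 0 := by positivity
    have h1 : (⟨n, hn0⟩ : ℕ+) = 1 := by
      apply hinj
      simp only
      congr 1
      rw [hk]
      push_cast
      simp only [PNat.mk_coe, PNat.one_coe, PNat.val_ofNat, Positive.val_one, Nat.cast_one]
      erw [PNat.one_coe]
      field_simp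
      ring
    have : n = 1 := congrArg (fun x : ℕ+ => (x : ℕ)) h1
    omega
  · intro h m n hmn
    by_cases hne : m = n
    · exact hne
    exfalso
    simp only at hmn
    set a : ℝ := (m : ℝ) with ha
    set b : ℝ := (n : ℝ) with hb
    have ha0 : 0 < a := by rw [ha]; exact_mod_cast m.pos
    have hb0 : 0 < b := by rw [hb]; exact_mod_cast n.pos
    have heq : (1 + κ * a ^ 2) / a = (1 + κ * b ^ 2) / b := by
      have h1 : (0:ℝ) ≤ (1 + κ * a ^ 2) / a := by positivity
      have h2 : (0:ℝ) ≤ (1 + κ * b ^ 2) / b := by positivity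
      exact (Real.sqrt_inj h1 h2).mp hmn
    have heq' : (1 + κ * a ^ 2) * b = (1 + κ * b ^ 2) * a := by
      field_simp at heq
      linarith [heq]
    have key : (b - a) * (1 - κ * (a * b)) = 0 := by linear_combination heq'
    have hmn' : (m : ℕ) ≠ (n : ℕ) := fun hc => hne (PNat.coe_injective hc)
    have hab : a ≠ b := by
      intro hc
      apply hmn'
      rw [ha, hb] at hc
      exact_mod_cast hc
    have h0 : 1 - κ * (a * b) = 0 := by
      rcases mul_eq_zero.mp key with h0 | h0
      · exact absurd (by linarith : a = b) hab
      · exact h0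
    have h2 : 2 ≤ (m : ℕ) * (n : ℕ) := by
      have h1m : 0 < (m : ℕ) := m.pos
      have h1n : 0 < (n : ℕ) := n.pos
      rcases lt_or_gt_of_ne hmn' with hlt | hlt
      · calc 2 ≤ (n : ℕ) := by omega
          _ ≤ (m:ℕ) * (n:ℕ) := Nat.le_mul_of_pos_left _ h1m
      · calc 2 ≤ (m : ℕ) := by omega
          _ ≤ (m:ℕ) * (n:ℕ) := Nat.le_mul_of_pos_right _ h1n
    apply h ((m : ℕ) * (n : ℕ)) h2
    push_cast
    rw [← ha, ← hb]
    have habne : a * b ≠ 0 := by positivity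
    field_simp
    linarith
end
end

section
/- Let E₁₁, E₁₂, E₂₂, F₁₁, F₁₂, F₂₁, F₂₂, G₁₁, G₁₂, G₂₂ be real numbers with G₁₁ ≠ 0, and set E := [[E₁₁, iE₁₂],[−iE₁₂, E₂₂]], F := [[F₁₁, iF₁₂],[iF₂₁, F₂₂]], G := [[G₁₁, iG₁₂],[−iG₁₂, G₂₂]], B := [[E, F],[Fᴴ, G]] (4×4 in 2×2 blocks), m := −F₁₁/G₁₁, Q := [[1,0],[0,0]], P := [[0,0],[0,1]], and Ỹ := I₄ + m·[[0,−P],[Q,0]]. Then Ỹᴴ B Ỹ = [[E⁽¹⁾, F⁽¹⁾],[F⁽¹⁾ᴴ, G⁽¹⁾]] where E⁽¹⁾ = E + [[2mF₁₁ + m²G₁₁, −imF₂₁],[imF₂₁, 0]], G⁽¹⁾ = G + [[0, imF₂₁],[−imF₂₁, −2mF₂₂ + m²E₂₂]], and F⁽¹⁾ = [[0, i(F₁₂ + m(G₁₂ − E₁₂) + m²F₂₁)],[iF₂₁, F₂₂ − mE₂₂]]. In particular the (1,1) entry of the new off-diagonal block F⁽¹⁾ vanishes. -/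
noncomputable section

open Matrix

set_option maxHeartbeats 2000000

/-- First step of block-decoupling: conjugating the self-adjoint block matrix
`B = [[E, F],[Fᴴ, G]]` by `Ỹ = I₄ + m[[0,−P],[Q,0]]` with `m = −F₁₁/G₁₁` produces
`Ỹᴴ B Ỹ = [[E⁽¹⁾, F⁽¹⁾],[F⁽¹⁾ᴴ, G⁽¹⁾]]` with the displayed blocks; in particular the
`(1,1)` entry of the new off-diagonal block `F⁽¹⁾` vanishes. -/
theorem first_block_decoupling_step
    (E11 E12 E22 F11 F12 F21 F22 G11 G12 G22 : ℝ) (hG11 : G11 ≠ 0) :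
    let E : Matrix (Fin 2) (Fin 2) ℂ :=
      !![(E11 : ℂ), Complex.I * (E12 : ℂ); -(Complex.I * (E12 : ℂ)), (E22 : ℂ)]
    let F : Matrix (Fin 2) (Fin 2) ℂ :=
      !![(F11 : ℂ), Complex.I * (F12 : ℂ); Complex.I * (F21 : ℂ), (F22 : ℂ)]
    let G : Matrix (Fin 2) (Fin 2) ℂ :=
      !![(G11 : ℂ), Complex.I * (G12 : ℂ); -(Complex.I * (G12 : ℂ)), (G22 : ℂ)]
    let B : Matrix (Fin 2 ⊕ Fin 2) (Fin 2 ⊕ Fin 2) ℂ := fromBlocks E F Fᴴ G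
    let m : ℝ := -F11 / G11
    let Q : Matrix (Fin 2) (Fin 2) ℂ := !![1, 0; 0, 0]
    let P : Matrix (Fin 2) (Fin 2) ℂ := !![0, 0; 0, 1]
    let Y : Matrix (Fin 2 ⊕ Fin 2) (Fin 2 ⊕ Fin 2) ℂ :=
      1 + (m : ℂ) • fromBlocks 0 (-P) Q 0
    let E1 : Matrix (Fin 2) (Fin 2) ℂ :=
      E + !![(2 * m * F11 + m ^ 2 * G11 : ℂ), -(Complex.I * (m * F21 : ℂ));
        Complex.I * (m * F21 : ℂ), 0]
    let G1 : Matrix (Fin 2) (Fin 2) ℂ :=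
      G + !![0, Complex.I * (m * F21 : ℂ);
        -(Complex.I * (m * F21 : ℂ)), (-2 * m * F22 + m ^ 2 * E22 : ℂ)]
    let F1 : Matrix (Fin 2) (Fin 2) ℂ :=
      !![0, Complex.I * ((F12 + m * (G12 - E12) + m ^ 2 * F21 : ℝ) : ℂ);
        Complex.I * (F21 : ℂ), (F22 - m * E22 : ℂ)]
    Yᴴ * B * Y = fromBlocks E1 F1 F1ᴴ G1 ∧ F1 0 0 = 0 := by
  intro E F G B m Q P Y E1 G1 F1
  have hG11c : (G11 : ℂ) ≠ 0 := by exact_mod_cast hG11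
  have hmC : (m : ℂ) = -(F11 : ℂ) / (G11 : ℂ) := by
    simp only [m]; push_cast; ring
  refine ⟨?_, by simp [F1]⟩
  have hY : Y = fromBlocks 1 (-((m:ℂ) • P)) ((m:ℂ) • Q) 1 := by
    have h1 : (1 : Matrix (Fin 2 ⊕ Fin 2) (Fin 2 ⊕ Fin 2) ℂ) = fromBlocks 1 0 0 1 :=
      (Matrix.fromBlocks_one).symm
    simp only [Y, h1, Matrix.fromBlocks_smul, Matrix.fromBlocks_add, smul_zero,
      smul_neg, add_zero, zero_add]
  have hYH : Yᴴ = fromBlocks 1 (((m:ℂ) • Q)ᴴ) ((-((m:ℂ) • P))ᴴ) 1 := by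
    rw [hY, Matrix.fromBlocks_conjTranspose]; simp
  rw [hYH, hY]
  show fromBlocks _ _ _ _ * fromBlocks E F Fᴴ G * fromBlocks _ _ _ _ = _
  rw [Matrix.fromBlocks_multiply, Matrix.fromBlocks_multiply, Matrix.fromBlocks_inj]
  refine ⟨?_, ?_, ?_, ?_⟩ <;>
  · ext i j
    fin_cases i <;> fin_cases j <;>
      simp [E, F, G, E1, F1, G1, P, Q, Matrix.mul_apply, Fin.sum_univ_succ,
        Matrix.conjTranspose_apply, Matrix.one_apply, hmC] <;>
      push_cast <;> field_simp <;> first | ring1 | (left; ring1) | (left; trivial) | tauto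
end
end
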